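/- arXiv:0912.1321 — 2 statements merged into one kernel-verified Lean document; each statement's English description precedes it below -/
import Mathlib

section
/- Let μ be the Gaussian measure on ℝ with mean α ∈ ℝ and variance β², where β > 0, let K > 0, let ρ ∈ {1, −1}, and set γ = (α + β² − ln K)/β. Then ∫_ℝ max(ρ(e^ω − K), 0) dμ(ω) = ρ·(e^{α + β²/2}·Φ(ργ) − K·Φ(ρ(γ − β))), where Φ is the standard normal cumulative distribution function. -/
/-! The payoff equals `ρ (e^ω - K)` on `S = {ω | ρ log K ≤ ρ ω}` and vanishes off it. Completing
the square, `e^ω` times the `N(α, β²)` density is `e^{α + β²/2}` times the `N(α + β², β²)` density,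
so the integral is `ρ (e^{α + β²/2} N(α + β², β²)(S) - K N(α, β²)(S))`. As `ω ↦ ρ ω` maps
`N(m, β²)` to `N(ρ m, β²)`, each `N(m, β²)(S)` is `Φ(ρ (m - log K) / β)`. -/

open MeasureTheory Real ProbabilityTheory

/-- The standard normal cumulative distribution function
`Φ(x) = ∫_{−∞}^{x} (2π)^{−1/2} e^{−s²/2} ds`. -/
noncomputable def stdNormalCDF (x : ℝ) : ℝ :=
  ∫ s in Set.Iic x, (Real.sqrt (2 * Real.pi))⁻¹ * Real.exp (-s ^ 2 / 2)

open scoped NNReal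
open Set

lemma stdNormalCDF_eq_measureReal (x : ℝ) :
    stdNormalCDF x = (gaussianReal 0 1).real (Iic x) := by
  rw [measureReal_def, gaussianReal_apply_eq_integral _ one_ne_zero,
    ENNReal.toReal_ofReal (setIntegral_nonneg measurableSet_Iic
      fun _ _ ↦ gaussianPDFReal_nonneg _ _ _)]
  simp [stdNormalCDF, gaussianPDFReal]

lemma gaussianReal_eq_map_gaussianReal_zero_one (m σ : ℝ) :
    gaussianReal m (σ ^ 2).toNNReal = (gaussianReal 0 1).map (fun x ↦ m - σ * x) := by
  have hcomp : (fun x ↦ m - σ * x) = (m - ·) ∘ (σ * ·) := rfl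
  rw [hcomp, ← Measure.map_map (by fun_prop) (by fun_prop), gaussianReal_map_const_mul,
    gaussianReal_map_const_sub]
  congr 1
  · ring
  · ext; simp [sq_nonneg]

lemma measureReal_gaussianReal_Ici {σ : ℝ} (hσ : 0 < σ) (m a : ℝ) :
    (gaussianReal m (σ ^ 2).toNNReal).real (Ici a) = stdNormalCDF ((m - a) / σ) := by
  have hpre : (fun x ↦ m - σ * x) ⁻¹' Ici a = Iic ((m - a) / σ) := by
    ext x
    simp only [mem_preimage, mem_Ici, mem_Iic, le_div_iff₀ hσ]
    constructor <;> intro h <;> linarith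
  rw [gaussianReal_eq_map_gaussianReal_zero_one,
    map_measureReal_apply (by fun_prop) measurableSet_Ici, hpre, stdNormalCDF_eq_measureReal]

lemma gaussianReal_map_mul_of_sq_eq_one {ρ : ℝ} (hρ : ρ ^ 2 = 1) (m : ℝ) (v : ℝ≥0) :
    (gaussianReal m v).map (ρ * ·) = gaussianReal (ρ * m) v := by
  rw [gaussianReal_map_const_mul]
  congr
  ext; simp [hρ]

lemma measureReal_gaussianReal_setOf_mul_le_mul {ρ : ℝ} (hρ : ρ ^ 2 = 1) {σ : ℝ} (hσ : 0 < σ)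
    (m c : ℝ) :
    (gaussianReal m (σ ^ 2).toNNReal).real {x | ρ * c ≤ ρ * x}
      = stdNormalCDF (ρ * (m - c) / σ) := by
  rw [show {x | ρ * c ≤ ρ * x} = (ρ * ·) ⁻¹' Ici (ρ * c) from rfl,
    ← map_measureReal_apply (by fun_prop) measurableSet_Ici,
    gaussianReal_map_mul_of_sq_eq_one hρ, measureReal_gaussianReal_Ici hσ, mul_sub]

lemma gaussianPDFReal_mul_exp (m : ℝ) (v : ℝ≥0) (x : ℝ) :
    gaussianPDFReal m v x * exp x = exp (m + v / 2) * gaussianPDFReal (m + v) v x := by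
  rcases eq_or_ne v 0 with rfl | hv
  · simp [gaussianPDFReal_zero_var]
  have hv' : (v : ℝ) ≠ 0 := by exact_mod_cast hv
  have hexp : -(x - m) ^ 2 / (2 * v) + x = (m + v / 2) + -(x - (m + v)) ^ 2 / (2 * v) := by
    field_simp
    ring
  simp only [gaussianPDFReal]
  rw [mul_assoc, ← exp_add, hexp, exp_add]
  ring

lemma setIntegral_exp_gaussianReal (m : ℝ) {v : ℝ≥0} (hv : v ≠ 0) {s : Set ℝ}
    (hs : MeasurableSet s) :
    ∫ x in s, exp x ∂(gaussianReal m v) = exp (m + v / 2) * (gaussianReal (m + v) v).real s := by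
  rw [← integral_indicator hs, integral_gaussianReal_eq_integral_smul hv, measureReal_def,
    gaussianReal_apply_eq_integral _ hv, ENNReal.toReal_ofReal (setIntegral_nonneg hs
      fun _ _ ↦ gaussianPDFReal_nonneg _ _ _), ← integral_const_mul, ← integral_indicator hs]
  congr 1 with x
  by_cases hx : x ∈ s <;> simp [hx, gaussianPDFReal_mul_exp]

lemma mul_exp_sub_nonneg_iff {K : ℝ} (hK : 0 < K) (ρ ω : ℝ) :
    0 ≤ ρ * (exp ω - K) ↔ ρ * log K ≤ ρ * ω := by
  obtain ⟨L, rfl⟩ : ∃ L, K = exp L := ⟨log K, (exp_log hK).symm⟩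
  rw [log_exp, ← sub_nonneg (a := ρ * ω), ← mul_sub, mul_nonneg_iff_pos_imp_nonneg,
    mul_nonneg_iff_pos_imp_nonneg, sub_nonneg, sub_nonneg, sub_pos, sub_pos, exp_le_exp, exp_lt_exp]

/-- If `μ` is the Gaussian measure with mean `α` and variance `β²` (`β > 0`), `K > 0`,
`ρ ∈ {1, −1}` and `γ = (α + β² − ln K)/β`, then
`∫_ℝ max(ρ(e^ω − K), 0) dμ(ω) = ρ·(e^{α + β²/2}·Φ(ργ) − K·Φ(ρ(γ − β)))`. -/
theorem gaussian_integral_payoff (α β K ρ γ : ℝ) (hβ : 0 < β) (hK : 0 < K)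
    (hρ : ρ = 1 ∨ ρ = -1) (hγ : γ = (α + β ^ 2 - Real.log K) / β) :
    ∫ ω, max (ρ * (Real.exp ω - K)) 0 ∂(gaussianReal α (Real.toNNReal (β ^ 2)))
      = ρ * (Real.exp (α + β ^ 2 / 2) * stdNormalCDF (ρ * γ)
          - K * stdNormalCDF (ρ * (γ - β))) := by
  set μ := gaussianReal α (β ^ 2).toNNReal
  set S := {ω : ℝ | ρ * log K ≤ ρ * ω}
  have hS : MeasurableSet S := measurableSet_le measurable_const (measurable_const_mul ρ)
  have hρ2 : ρ ^ 2 = 1 := by rcases hρ with rfl | rfl <;> norm_num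
  have hv : (β ^ 2).toNNReal ≠ 0 := by simp [hβ.ne']
  have hexp : Integrable (fun ω ↦ exp ω) μ := by
    simpa using integrable_exp_mul_gaussianReal (μ := α) (v := (β ^ 2).toNNReal) 1
  have hpayoff : (fun ω ↦ max (ρ * (exp ω - K)) 0) = S.indicator (fun ω ↦ ρ * (exp ω - K)) := by
    ext ω
    simp only [indicator, S, mem_ofPred_eq, ← mul_exp_sub_nonneg_iff hK, max_def']
  calc ∫ ω, max (ρ * (exp ω - K)) 0 ∂μ
      = ρ * (∫ ω in S, exp ω ∂μ - K * μ.real S) := by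
        rw [hpayoff, integral_indicator hS, integral_const_mul, integral_sub hexp.integrableOn
          (integrable_const K), setIntegral_const, smul_eq_mul, mul_comm K]
    _ = _ := by
        rw [setIntegral_exp_gaussianReal α hv hS, measureReal_gaussianReal_setOf_mul_le_mul hρ2 hβ,
          measureReal_gaussianReal_setOf_mul_le_mul hρ2 hβ, Real.coe_toNNReal _ (sq_nonneg β), hγ]
        congr 4
        · ring
        · field_simp
          ring
end

section
/- Define F : ℝ → ℝ by F(h) = 1 − ∫₀¹ Φ(−h·(1−√(1−θ))/√θ) dθ + h·∫₀¹ (√(1−θ)/√θ)·φ(−h·(1−√(1−θ))/√θ) dθ, where Φ is the standard normal cumulative distribution function and φ the standard normal density. Then the equation F(h) = 0 has a unique real solution h*, and this solution satisfies h* < 0. -/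
open MeasureTheory Real

/-- The standard normal density `φ(x) = (2π)^{−1/2} e^{−x²/2}`. -/
noncomputable def stdNormalPDF (x : ℝ) : ℝ :=
  (Real.sqrt (2 * Real.pi))⁻¹ * Real.exp (-x ^ 2 / 2)

/-- `F(h) = 1 − ∫₀¹ Φ(−h(1−√(1−θ))/√θ) dθ
          + h·∫₀¹ (√(1−θ)/√θ)·φ(−h(1−√(1−θ))/√θ) dθ`. -/
noncomputable def Fh (h : ℝ) : ℝ :=
  1 - (∫ θ in (0:ℝ)..1, stdNormalCDF (-h * (1 - Real.sqrt (1 - θ)) / Real.sqrt θ))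
    + h * ∫ θ in (0:ℝ)..1,
        (Real.sqrt (1 - θ) / Real.sqrt θ) *
          stdNormalPDF (-h * (1 - Real.sqrt (1 - θ)) / Real.sqrt θ)

/-!
The substitution `θ = ψ t = (2 t / (1 + t²))²` inverts `θ ↦ (1 - √(1 - θ)) / √θ` on `[0, 1]`, so
both integrands of `F` become functions of `-h t`. Integrating the `φ`-term by parts then gives
`F h = 1 + 4 Φ 0 - ∫₀¹ k t Φ (-h t) dt` with an explicit kernel `k ≥ 0` of total mass `5`.
Hence `F` is continuous and strictly increasing, `F 0 = 1 - Φ 0 > 0`, and by dominated convergence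
`F h → 4 Φ 0 - 4 < 0` as `h → -∞`.
-/

open Set Filter Topology intervalIntegral ProbabilityTheory

lemma stdNormalPDF_eq_gaussianPDFReal : stdNormalPDF = gaussianPDFReal 0 1 := by
  ext x
  simp [stdNormalPDF, gaussianPDFReal]

lemma stdNormalPDF_pos (x : ℝ) : 0 < stdNormalPDF x := by
  rw [stdNormalPDF_eq_gaussianPDFReal]
  exact gaussianPDFReal_pos 0 1 x one_ne_zero

@[fun_prop]
lemma continuous_stdNormalPDF : Continuous stdNormalPDF := by
  unfold stdNormalPDF
  fun_prop

lemma integrable_stdNormalPDF : Integrable stdNormalPDF := by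
  rw [stdNormalPDF_eq_gaussianPDFReal]
  exact integrable_gaussianPDFReal 0 1

lemma integral_stdNormalPDF : ∫ x, stdNormalPDF x = 1 := by
  rw [stdNormalPDF_eq_gaussianPDFReal]
  exact integral_gaussianPDFReal_eq_one 0 one_ne_zero

lemma stdNormalCDF_sub_stdNormalCDF (a b : ℝ) :
    stdNormalCDF b - stdNormalCDF a = ∫ s in a..b, stdNormalPDF s :=
  integral_Iic_sub_Iic integrable_stdNormalPDF.integrableOn integrable_stdNormalPDF.integrableOn

lemma hasDerivAt_stdNormalCDF (x : ℝ) : HasDerivAt stdNormalCDF (stdNormalPDF x) x := by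
  have hFTC : HasDerivAt (fun y => stdNormalCDF 0 + ∫ s in (0 : ℝ)..y, stdNormalPDF s)
      (stdNormalPDF x) x :=
    (integral_hasDerivAt_right (continuous_stdNormalPDF.intervalIntegrable _ _)
      continuous_stdNormalPDF.stronglyMeasurable.stronglyMeasurableAtFilter
      continuous_stdNormalPDF.continuousAt).const_add _
  refine hFTC.congr_of_eventuallyEq (Eventually.of_forall fun y => ?_)
  dsimp only
  rw [← stdNormalCDF_sub_stdNormalCDF]
  ring

@[fun_prop]
lemma continuous_stdNormalCDF : Continuous stdNormalCDF :=
  continuous_iff_continuousAt.2 fun x => (hasDerivAt_stdNormalCDF x).continuousAt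

lemma stdNormalCDF_strictMono : StrictMono stdNormalCDF :=
  strictMono_of_hasDerivAt_pos hasDerivAt_stdNormalCDF stdNormalPDF_pos

lemma stdNormalCDF_nonneg (x : ℝ) : 0 ≤ stdNormalCDF x :=
  setIntegral_nonneg measurableSet_Iic fun s _ => (stdNormalPDF_pos s).le

lemma tendsto_stdNormalCDF_atTop : Tendsto stdNormalCDF atTop (𝓝 1) := by
  have h := tendsto_setIntegral_of_monotone (μ := volume) (fun x : ℝ => measurableSet_Iic)
    (fun _ _ hxy => Iic_subset_Iic.2 hxy) integrable_stdNormalPDF.integrableOn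
  rwa [iUnion_Iic, setIntegral_univ, integral_stdNormalPDF] at h

lemma stdNormalCDF_le_one (x : ℝ) : stdNormalCDF x ≤ 1 :=
  stdNormalCDF_strictMono.monotone.ge_of_tendsto tendsto_stdNormalCDF_atTop x

lemma integral_congr_Ioc {f g : ℝ → ℝ} {a b : ℝ} (hab : a ≤ b) (h : ∀ t ∈ Ioc a b, f t = g t) :
    ∫ t in a..b, f t = ∫ t in a..b, g t :=
  integral_congr_ae (Eventually.of_forall fun t ht => h t (by rwa [uIoc_of_le hab] at ht))

namespace Fh

noncomputable def psi (t : ℝ) : ℝ := (2 * t / (1 + t ^ 2)) ^ 2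

noncomputable def psiDeriv (t : ℝ) : ℝ := 8 * t * (1 - t ^ 2) / (1 + t ^ 2) ^ 3

noncomputable def pdfWeight (t : ℝ) : ℝ := 4 * (1 - t ^ 2) ^ 2 / (1 + t ^ 2) ^ 3

noncomputable def kernel (t : ℝ) : ℝ := 48 * t * (1 - t ^ 2) / (1 + t ^ 2) ^ 4

lemma hasDerivAt_one_add_sq (t : ℝ) : HasDerivAt (fun t : ℝ => 1 + t ^ 2) (2 * t) t := by
  simpa using (hasDerivAt_pow 2 t).const_add 1

lemma hasDerivAt_psi (t : ℝ) : HasDerivAt psi (psiDeriv t) t := by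
  have hne : 1 + t ^ 2 ≠ 0 := by positivity
  have h := (((hasDerivAt_id t).const_mul 2).div (hasDerivAt_one_add_sq t) hne).pow 2
  refine h.congr_deriv ?_
  norm_num [psiDeriv]
  field_simp
  ring

lemma hasDerivAt_pdfWeight (t : ℝ) : HasDerivAt pdfWeight (psiDeriv t - kernel t) t := by
  have hne : 1 + t ^ 2 ≠ 0 := by positivity
  have hnum :
      HasDerivAt (fun t : ℝ => 4 * (1 - t ^ 2) ^ 2) (4 * (2 * (1 - t ^ 2) * -(2 * t))) t := by
    simpa using (((hasDerivAt_pow 2 t).const_sub 1).pow 2).const_mul 4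
  refine (hnum.div ((hasDerivAt_one_add_sq t).pow 3) (pow_ne_zero 3 hne)).congr_deriv ?_
  norm_num [psiDeriv, kernel]
  field_simp
  ring

@[fun_prop]
lemma continuous_psiDeriv : Continuous psiDeriv := by
  unfold psiDeriv
  fun_prop (disch := intro t; positivity)

@[fun_prop]
lemma continuous_kernel : Continuous kernel := by
  unfold kernel
  fun_prop (disch := intro t; positivity)

lemma kernel_nonneg {t : ℝ} (h0 : 0 ≤ t) (h1 : t ≤ 1) : 0 ≤ kernel t := by
  have : 0 ≤ 1 - t ^ 2 := by nlinarith
  unfold kernel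
  positivity

lemma kernel_pos {t : ℝ} (h0 : 0 < t) (h1 : t < 1) : 0 < kernel t := by
  have : 0 < 1 - t ^ 2 := by nlinarith
  unfold kernel
  positivity

lemma integral_kernel : ∫ t in (0 : ℝ)..1, kernel t = 5 := by
  have h (t : ℝ) : HasDerivAt (psi - pdfWeight) (kernel t) t := by
    simpa using (hasDerivAt_psi t).sub (hasDerivAt_pdfWeight t)
  rw [integral_eq_sub_of_hasDerivAt (fun t _ => h t) (continuous_kernel.intervalIntegrable _ _)]
  norm_num [psi, pdfWeight]

lemma sqrt_psi {t : ℝ} (ht : 0 ≤ t) : √(psi t) = 2 * t / (1 + t ^ 2) :=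
  Real.sqrt_sq (by positivity)

lemma sqrt_one_sub_psi {t : ℝ} (h0 : 0 ≤ t) (h1 : t ≤ 1) :
    √(1 - psi t) = (1 - t ^ 2) / (1 + t ^ 2) := by
  have hsq : 1 - psi t = ((1 - t ^ 2) / (1 + t ^ 2)) ^ 2 := by
    unfold psi
    field_simp
    ring
  have : 0 ≤ 1 - t ^ 2 := by nlinarith
  rw [hsq]
  exact Real.sqrt_sq (by positivity)

lemma one_sub_sqrt_one_sub_psi_div {t : ℝ} (h0 : 0 < t) (h1 : t ≤ 1) :
    (1 - √(1 - psi t)) / √(psi t) = t := by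
  rw [sqrt_psi h0.le, sqrt_one_sub_psi h0.le h1]
  field_simp
  ring

lemma sqrt_ratio_psi_mul_psiDeriv {t : ℝ} (h0 : 0 < t) (h1 : t ≤ 1) :
    √(1 - psi t) / √(psi t) * psiDeriv t = pdfWeight t := by
  rw [sqrt_psi h0.le, sqrt_one_sub_psi h0.le h1]
  unfold psiDeriv pdfWeight
  field_simp
  ring

lemma integral_comp_psi (g : ℝ → ℝ) :
    ∫ θ in (0 : ℝ)..1, g θ = ∫ t in (0 : ℝ)..1, g (psi t) * psiDeriv t := by
  have h := integral_comp_mul_deriv_of_deriv_nonneg (g := g) (a := 0) (b := 1)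
    (fun t _ => (hasDerivAt_psi t).continuousAt.continuousWithinAt)
    (fun t _ => hasDerivAt_psi t) (fun t ht => ?_)
  · norm_num [psi] at h
    exact h.symm
  · obtain ⟨h0, h1⟩ : 0 < t ∧ t < 1 := by simpa using ht
    have : 0 ≤ 1 - t ^ 2 := by nlinarith
    unfold psiDeriv
    positivity

lemma integral_comp_Fh_arg (f : ℝ → ℝ) (h : ℝ) :
    ∫ θ in (0 : ℝ)..1, f (-h * (1 - √(1 - θ)) / √θ)
      = ∫ t in (0 : ℝ)..1, psiDeriv t * f (-h * t) := by
  rw [integral_comp_psi]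
  refine integral_congr_Ioc zero_le_one fun t ht => ?_
  rw [mul_div_assoc, one_sub_sqrt_one_sub_psi_div ht.1 ht.2, mul_comm]

lemma integral_sqrt_ratio_mul_comp_Fh_arg (f : ℝ → ℝ) (h : ℝ) :
    ∫ θ in (0 : ℝ)..1, √(1 - θ) / √θ * f (-h * (1 - √(1 - θ)) / √θ)
      = ∫ t in (0 : ℝ)..1, pdfWeight t * f (-h * t) := by
  rw [integral_comp_psi]
  refine integral_congr_Ioc zero_le_one fun t ht => ?_
  rw [mul_div_assoc, one_sub_sqrt_one_sub_psi_div ht.1 ht.2,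
    ← sqrt_ratio_psi_mul_psiDeriv ht.1 ht.2]
  ring

end Fh

open Fh

lemma mul_integral_mul_stdNormalPDF_neg_mul {u u' : ℝ → ℝ} {a b : ℝ}
    (hu : ∀ t ∈ uIcc a b, HasDerivAt u (u' t) t) (hu' : IntervalIntegrable u' volume a b) (h : ℝ) :
    h * ∫ t in a..b, u t * stdNormalPDF (-h * t)
      = u a * stdNormalCDF (-h * a) - u b * stdNormalCDF (-h * b)
        + ∫ t in a..b, u' t * stdNormalCDF (-h * t) := by
  have hΦ (t : ℝ) :
      HasDerivAt (fun t => stdNormalCDF (-h * t)) (-h * stdNormalPDF (-h * t)) t := by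
    refine ((hasDerivAt_stdNormalCDF _).comp t ((hasDerivAt_id' t).const_mul (-h))).congr_deriv ?_
    ring
  have hibp := integral_mul_deriv_eq_deriv_mul hu (fun t _ => hΦ t) hu'
    (Continuous.intervalIntegrable (by fun_prop) _ _)
  have hpull : ∫ t in a..b, u t * (-h * stdNormalPDF (-h * t))
      = -(h * ∫ t in a..b, u t * stdNormalPDF (-h * t)) := by
    rw [← intervalIntegral.integral_const_mul, ← intervalIntegral.integral_neg]
    congr 1 with t
    ring
  linarith

lemma Fh_eq (h : ℝ) :
    Fh h = 1 + 4 * stdNormalCDF 0 - ∫ t in (0 : ℝ)..1, kernel t * stdNormalCDF (-h * t) := by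
  have hsplit : ∫ t in (0 : ℝ)..1, (psiDeriv t - kernel t) * stdNormalCDF (-h * t)
      = (∫ t in (0 : ℝ)..1, psiDeriv t * stdNormalCDF (-h * t))
        - ∫ t in (0 : ℝ)..1, kernel t * stdNormalCDF (-h * t) := by
    simp_rw [sub_mul]
    exact intervalIntegral.integral_sub (Continuous.intervalIntegrable (by fun_prop) _ _)
      (Continuous.intervalIntegrable (by fun_prop) _ _)
  rw [Fh, integral_comp_Fh_arg, integral_sqrt_ratio_mul_comp_Fh_arg,
    mul_integral_mul_stdNormalPDF_neg_mul (fun t _ => hasDerivAt_pdfWeight t)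
      ((continuous_psiDeriv.sub continuous_kernel).intervalIntegrable _ _), hsplit]
  norm_num [pdfWeight]
  ring

lemma continuous_kernel_mul_stdNormalCDF_neg_mul (h : ℝ) :
    Continuous fun t => kernel t * stdNormalCDF (-h * t) := by
  fun_prop

lemma Fh_strictMono : StrictMono Fh := by
  intro h₁ h₂ hlt
  have hlt_int : ∫ t in (0 : ℝ)..1, kernel t * stdNormalCDF (-h₂ * t)
      < ∫ t in (0 : ℝ)..1, kernel t * stdNormalCDF (-h₁ * t) :=
    integral_lt_integral_of_continuousOn_of_le_of_exists_lt one_pos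
      (continuous_kernel_mul_stdNormalCDF_neg_mul h₂).continuousOn
      (continuous_kernel_mul_stdNormalCDF_neg_mul h₁).continuousOn
      (fun t ht => mul_le_mul_of_nonneg_left
        (stdNormalCDF_strictMono.monotone (by nlinarith [ht.1])) (kernel_nonneg ht.1.le ht.2))
      ⟨1 / 2, ⟨by norm_num, by norm_num⟩, mul_lt_mul_of_pos_left
        (stdNormalCDF_strictMono (by linarith)) (kernel_pos (by norm_num) (by norm_num))⟩
  rw [Fh_eq, Fh_eq]
  linarith

lemma continuous_Fh : Continuous Fh := by
  rw [funext Fh_eq]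
  exact continuous_const.sub
    (continuous_parametric_intervalIntegral_of_continuous' (by fun_prop) 0 1)

lemma Fh_zero : Fh 0 = 1 - stdNormalCDF 0 := by
  rw [Fh_eq]
  simp only [neg_zero, zero_mul, intervalIntegral.integral_mul_const, integral_kernel]
  ring

lemma tendsto_Fh_atBot : Tendsto Fh atBot (𝓝 (4 * stdNormalCDF 0 - 4)) := by
  have hlim : Tendsto (fun h => ∫ t in (0 : ℝ)..1, kernel t * stdNormalCDF (-h * t)) atBot
      (𝓝 (∫ t in (0 : ℝ)..1, kernel t * 1)) := by
    refine tendsto_integral_filter_of_dominated_convergence kernel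
      (Eventually.of_forall fun h =>
        (continuous_kernel_mul_stdNormalCDF_neg_mul h).aestronglyMeasurable)
      (Eventually.of_forall fun h => Eventually.of_forall fun t ht => ?_)
      (continuous_kernel.intervalIntegrable _ _)
      (Eventually.of_forall fun t ht => ?_)
    all_goals rw [uIoc_of_le zero_le_one] at ht
    · have hk := kernel_nonneg ht.1.le ht.2
      rw [Real.norm_of_nonneg (mul_nonneg hk (stdNormalCDF_nonneg _))]
      exact mul_le_of_le_one_right hk (stdNormalCDF_le_one _)
    · exact (tendsto_stdNormalCDF_atTop.comp
        (tendsto_neg_atBot_atTop.atTop_mul_const ht.1)).const_mul (kernel t)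
  simp only [mul_one, integral_kernel] at hlim
  rw [funext Fh_eq]
  convert tendsto_const_nhds.sub hlim using 2
  ring

/-- The equation `F(h) = 0` has a unique real solution `h*`, and `h* < 0`. -/
theorem Fh_unique_negative_root :
    (∃! h : ℝ, Fh h = 0) ∧ (∀ h : ℝ, Fh h = 0 → h < 0) := by
  have hΦ₀ : stdNormalCDF 0 < 1 :=
    (stdNormalCDF_strictMono one_pos).trans_le (stdNormalCDF_le_one 1)
  have hF₀ : 0 < Fh 0 := by
    rw [Fh_zero]
    linarith
  obtain ⟨a, ha⟩ : ∃ a, Fh a < 0 :=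
    (tendsto_Fh_atBot.eventually (gt_mem_nhds (by linarith))).exists
  have ha₀ : a ≤ 0 := (Fh_strictMono.lt_iff_lt.1 (ha.trans hF₀)).le
  obtain ⟨c, -, hc⟩ :=
    intermediate_value_Icc ha₀ continuous_Fh.continuousOn ⟨ha.le, hF₀.le⟩
  exact ⟨⟨c, hc, fun h hh => Fh_strictMono.injective (hh.trans hc.symm)⟩,
    fun h hh => Fh_strictMono.lt_iff_lt.1 (hh ▸ hF₀)⟩
end
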